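/- arXiv:1709.07812 — 4 statements merged into one kernel-verified Lean document; each statement's English description precedes it below -/
import Mathlib

section
/- There exist a 2×2 Hermitian matrix A (namely A = diag(1,0)) and a nonzero 2×2 complex symmetric matrix B (namely B with zero diagonal and both off-diagonal entries equal to b ≠ 0) such that there is no invertible 2×2 complex matrix P with both P*AP and PᵀBP diagonal. -/
open Matrix

theorem stmt_4 (b : ℂ) (hb : b ≠ 0) :
    ¬ ∃ P : Matrix (Fin 2) (Fin 2) ℂ, IsUnit P ∧
      (Pᴴ * !![(1 : ℂ), 0; 0, 0] * P).IsDiag ∧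
      (Pᵀ * !![(0 : ℂ), b; b, 0] * P).IsDiag := by
  rintro ⟨P, hP, h1, h2⟩
  have hdet : P.det ≠ 0 :=
    isUnit_iff_ne_zero.mp ((Matrix.isUnit_iff_isUnit_det P).mp hP)
  rw [Matrix.det_fin_two] at hdet
  have e1 := h1 (show (0 : Fin 2) ≠ 1 by decide)
  have e2 := h2 (show (0 : Fin 2) ≠ 1 by decide)
  simp [Matrix.mul_apply, Fin.sum_univ_two, Matrix.conjTranspose_apply,
    Matrix.transpose_apply] at e1 e2
  rcases e1 with e1 | e1
  · have : P 0 0 = 0 := by simpa using e1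
    rw [this] at hdet e2
    simp at hdet e2
    tauto
  · rw [e1] at hdet e2
    simp at hdet e2
    tauto
end

section
/- For Hermitian n×n matrices A and Ã, (A, I) ∼ (Ã, I) (∼-congruence with the identity as the symmetric matrix) holds if and only if there exist a complex orthogonal matrix Q (i.e. QᵀQ = I) and ε ∈ {1,−1} with Ã = ε Q*AQ. -/
/-!
A square root `d` of `c̄` has modulus one, so replacing `P` by `d • P` leaves `P*AP` unchanged and
turns `c̄ PᵀP = 1` into `(dP)ᵀ(dP) = 1`; conversely `P := d • Q` with `d² = ε` realises `ε Q*AQ`.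
It remains that `P*AP` and `c • P*AP` are both Hermitian, which forces `c = ±1` unless `P*AP = 0`.
-/

open Matrix

lemma Complex.exists_sq_eq_and_star_mul_self_eq_one {c : ℂ} (hc : ‖c‖ = 1) :
    ∃ d : ℂ, d ^ 2 = c ∧ star d * d = 1 := by
  obtain ⟨d, hd⟩ := IsAlgClosed.exists_pow_nat_eq c two_pos
  have hnorm : ‖d‖ = 1 := by
    have : ‖d‖ ^ 2 = 1 := by rw [← norm_pow, hd, hc]
    exact (pow_eq_one_iff_of_nonneg (norm_nonneg d) two_ne_zero).mp this
  refine ⟨d, hd, ?_⟩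
  rw [Complex.star_def, mul_comm, Complex.mul_conj, Complex.normSq_eq_norm_sq, hnorm]
  norm_num

lemma Complex.eq_one_or_eq_neg_one_of_conj_eq {c : ℂ} (hc : ‖c‖ = 1)
    (hconj : starRingEnd ℂ c = c) : c = 1 ∨ c = -1 := by
  rw [Complex.conj_eq_iff_re] at hconj
  rw [← hconj, Complex.norm_real, Real.norm_eq_abs, abs_eq zero_le_one] at hc
  rcases hc with h | h
  · left; rw [← hconj, h]; norm_num
  · right; rw [← hconj, h]; norm_num

lemma Matrix.smul_conjTranspose_mul_mul_smul {n R : Type*} [Fintype n] [CommRing R] [StarRing R]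
    (d : R) (A P : Matrix n n R) : (d • P)ᴴ * A * (d • P) = (star d * d) • (Pᴴ * A * P) := by
  rw [conjTranspose_smul, smul_mul_assoc, smul_mul_assoc, mul_smul_comm, smul_smul]

lemma Matrix.smul_transpose_mul_smul {n R : Type*} [Fintype n] [CommRing R]
    (d : R) (P : Matrix n n R) : (d • P)ᵀ * (d • P) = d ^ 2 • (Pᵀ * P) := by
  rw [transpose_smul, smul_mul_assoc, mul_smul_comm, smul_smul, sq]

lemma Matrix.IsHermitian.exists_sign_smul_eq {n : Type*} [Fintype n] {B : Matrix n n ℂ}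
    (hB : B.IsHermitian) {c : ℂ} (hc : ‖c‖ = 1) (hcB : (c • B).IsHermitian) :
    ∃ ε : ℂ, (ε = 1 ∨ ε = -1) ∧ c • B = ε • B := by
  by_cases hB0 : B = 0
  · exact ⟨1, Or.inl rfl, by simp [hB0]⟩
  have hconj : starRingEnd ℂ c = c := by
    have h : (starRingEnd ℂ c - c) • B = 0 := by
      rw [sub_smul, ← Complex.star_def, ← hB.eq, ← conjTranspose_smul, hcB.eq, hB.eq, sub_self]
    exact sub_eq_zero.mp ((smul_eq_zero.mp h).resolve_right hB0)
  exact ⟨c, Complex.eq_one_or_eq_neg_one_of_conj_eq hc hconj, rfl⟩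

theorem stmt_6 (n : ℕ) (A A' : Matrix (Fin n) (Fin n) ℂ)
    (hA : A.IsHermitian) (hA2 : A'.IsHermitian) :
    (∃ P : Matrix (Fin n) (Fin n) ℂ, IsUnit P ∧ ∃ c : ℂ, ‖c‖ = 1 ∧
        A' = c • (Pᴴ * A * P) ∧ (1 : Matrix (Fin n) (Fin n) ℂ) = (starRingEnd ℂ c) • (Pᵀ * 1 * P))
      ↔
    (∃ Q : Matrix (Fin n) (Fin n) ℂ, ∃ ε : ℂ, (ε = 1 ∨ ε = -1) ∧
        Qᵀ * Q = 1 ∧ A' = ε • (Qᴴ * A * Q)) := by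
  constructor
  · rintro ⟨P, -, c, hc, hA', hI⟩
    obtain ⟨d, hd, hdd⟩ :=
      Complex.exists_sq_eq_and_star_mul_self_eq_one (c := starRingEnd ℂ c) (by simpa using hc)
    have hB : (c • (Pᴴ * A * P)).IsHermitian := hA' ▸ hA2
    obtain ⟨ε, hε, hcε⟩ := (isHermitian_conjTranspose_mul_mul P hA).exists_sign_smul_eq hc hB
    refine ⟨d • P, ε, hε, ?_, ?_⟩
    · rw [smul_transpose_mul_smul, hd, hI, mul_one]
    · rw [smul_conjTranspose_mul_mul_smul, hdd, one_smul, hA', hcε]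
  · rintro ⟨Q, ε, hε, hQ, hA'⟩
    have hnorm : ‖ε‖ = 1 := by rcases hε with rfl | rfl <;> simp
    obtain ⟨d, hd, hdd⟩ := Complex.exists_sq_eq_and_star_mul_self_eq_one hnorm
    have hεε : starRingEnd ℂ ε * ε = 1 := by rcases hε with rfl | rfl <;> simp
    refine ⟨d • Q, ?_, ε, hnorm, ?_, ?_⟩
    · refine IsUnit.of_mul_eq_one (star d • Qᵀ) ?_
      rw [smul_mul_smul_comm, mul_comm, hdd, mul_eq_one_comm.mp hQ, one_smul]
    · rw [smul_conjTranspose_mul_mul_smul, hdd, one_smul, hA']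
    · rw [mul_one, smul_transpose_mul_smul, hd, hQ, smul_smul, hεε, one_smul]
end

section
/- For x > 0, the 3×3 Hermitian matrix H₃(x) = (1/2)·[[0, 1+i, 2x],[1−i, 2x, 1+i],[2x, 1−i, 0]] has three distinct real eigenvalues, exactly one of which is negative and two of which are positive. -/
open Matrix Polynomial

theorem stmt_11 (x : ℝ) (hx : 0 < x) :
    ∃ a b c : ℝ, a < 0 ∧ 0 < b ∧ 0 < c ∧ b ≠ c ∧
      ∀ lam : ℂ,
        ((1 / 2 : ℂ) • !![(0 : ℂ), 1 + Complex.I, 2 * x;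
            1 - Complex.I, 2 * x, 1 + Complex.I;
            2 * x, 1 - Complex.I, 0]).charpoly.IsRoot lam ↔
          lam = a ∨ lam = b ∨ lam = c := by
  set f : ℝ → ℝ := fun t => t^3 - x*t^2 - (x^2+1)*t + x^3 with hf
  have hcont : Continuous f := by fun_prop
  -- root a in (-(x+1), 0)
  have h1 : f (-(x+1)) < 0 := by simp only [hf]; nlinarith
  have h2 : f 0 = x^3 := by simp [hf]
  have h3 : f x = -x := by simp only [hf]; ring
  set T : ℝ := x + x^2 + 2 with hT
  have h4 : 0 < f T := by simp only [hf, hT]; nlinarith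
  obtain ⟨a, ha_mem, hfa⟩ := intermediate_value_Ioo (by linarith : -(x+1) ≤ (0:ℝ))
    hcont.continuousOn (⟨h1, by rw [h2]; positivity⟩ : (0:ℝ) ∈ Set.Ioo (f (-(x+1))) (f 0))
  obtain ⟨b, hb_mem, hfb⟩ := intermediate_value_Ioo' (le_of_lt hx)
    hcont.continuousOn (⟨by rw [h3]; linarith, by rw [h2]; positivity⟩ : (0:ℝ) ∈ Set.Ioo (f x) (f 0))
  obtain ⟨c, hc_mem, hfc⟩ := intermediate_value_Ioo (by nlinarith : x ≤ T)
    hcont.continuousOn (⟨by rw [h3]; linarith, h4⟩ : (0:ℝ) ∈ Set.Ioo (f x) (f T))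
  have ha0 : a < 0 := ha_mem.2
  have hb0 : 0 < b := hb_mem.1
  have hbx : b < x := hb_mem.2
  have hxc : x < c := hc_mem.1
  have hc0 : 0 < c := lt_trans hx hxc
  have hab : a ≠ b := ne_of_lt (lt_trans ha0 hb0)
  have hbc : b ≠ c := ne_of_lt (lt_trans hbx hxc)
  have hac : a ≠ c := ne_of_lt (lt_trans ha0 hc0)
  simp only [hf] at hfa hfb hfc
  -- Vieta
  have qab : a^2 + a*b + b^2 - x*(a+b) - (x^2+1) = 0 := by
    have h : (a - b) * (a^2 + a*b + b^2 - x*(a+b) - (x^2+1)) = 0 := by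
      linear_combination hfa - hfb
    rcases mul_eq_zero.1 h with h | h
    · exact absurd (sub_eq_zero.1 h) hab
    · exact h
  have qbc : b^2 + b*c + c^2 - x*(b+c) - (x^2+1) = 0 := by
    have h : (b - c) * (b^2 + b*c + c^2 - x*(b+c) - (x^2+1)) = 0 := by
      linear_combination hfb - hfc
    rcases mul_eq_zero.1 h with h | h
    · exact absurd (sub_eq_zero.1 h) hbc
    · exact h
  have e1 : a + b + c = x := by
    have h : (a - c) * (a + b + c - x) = 0 := by linear_combination qab - qbc
    rcases mul_eq_zero.1 h with h | h
    · exact absurd (sub_eq_zero.1 h) hac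
    · linarith [sub_eq_zero.1 h]
  have e2 : a*b + b*c + a*c = -(x^2+1) := by linear_combination (a+b) * e1 - qab
  have e3 : a*b*c = -x^3 := by linear_combination hfa + a * e2 - a^2 * e1
  refine ⟨a, b, c, ha0, hb0, hc0, hbc, fun lam => ?_⟩
  have heval : ∀ μ : ℂ,
      (((1 / 2 : ℂ) • !![(0 : ℂ), 1 + Complex.I, 2 * x;
        1 - Complex.I, 2 * x, 1 + Complex.I;
        2 * x, 1 - Complex.I, 0]).charpoly).eval μ
      = (μ - a) * (μ - b) * (μ - c) := by
    intro μ
    rw [charpoly, eval_det, matPolyEquiv_charmatrix]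
    simp only [Polynomial.eval_sub, Polynomial.eval_X, Polynomial.eval_C]
    have E1 : (a:ℂ) + b + c = x := by exact_mod_cast congrArg (Complex.ofReal) e1
    have E2 : (a:ℂ)*b + b*c + a*c = -(x^2+1) := by exact_mod_cast congrArg (Complex.ofReal) e2
    have E3 : (a:ℂ)*b*c = -x^3 := by exact_mod_cast congrArg (Complex.ofReal) e3
    simp [det_fin_three, Matrix.scalar_apply, Matrix.smul_apply]
    linear_combination ((μ - (x:ℂ))/2) * Complex.I_sq + μ^2 * E1 - μ * E2 + E3
  rw [Polynomial.IsRoot, heval]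
  constructor
  · intro h
    rcases mul_eq_zero.1 h with h | h
    · rcases mul_eq_zero.1 h with h | h
      · exact Or.inl (sub_eq_zero.1 h)
      · exact Or.inr (Or.inl (sub_eq_zero.1 h))
    · exact Or.inr (Or.inr (sub_eq_zero.1 h))
  · rintro (rfl | rfl | rfl) <;> ring
end

section
/- Let λ, μ ∈ ℝ∖{0} have opposite signs and |λ| ≠ |μ|, and let ν ∈ ℝ. Then there is no complex orthogonal 3×3 matrix Q (QᵀQ = I) satisfying Q*(diag(λ, μ, ν))Q = diag(−λ, −μ, ν). -/
open Matrix

private lemma re_zero_aux (r s : ℝ) (z : ℂ) (h : (r : ℂ) * z = (s : ℂ) * (starRingEnd ℂ) z)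
    (hrs : r ≠ s) : z.re = 0 := by
  have h2 := congrArg Complex.re h
  simp only [Complex.mul_re, Complex.ofReal_re, Complex.ofReal_im, Complex.conj_re,
    Complex.conj_im] at h2
  have h3 : (r - s) * z.re = 0 := by linear_combination h2
  rcases mul_eq_zero.mp h3 with h4 | h4
  · exact absurd (sub_eq_zero.mp h4) hrs
  · exact h4

private lemma col_contra (Q : Matrix (Fin 3) (Fin 3) ℂ) (j : Fin 3)
    (hre : ∀ i, (Q i j).re = 0)
    (hsum : (Qᵀ * Q) j j = 1) : False := by
  have h1 : ((Qᵀ * Q) j j).re = 1 := by rw [hsum]; simp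
  rw [Matrix.mul_apply] at h1
  have h2 : ∀ k : Fin 3, (Qᵀ j k * Q k j).re = -((Q k j).im ^ 2) := by
    intro k
    rw [Matrix.transpose_apply, Complex.mul_re, hre k]
    ring
  rw [Complex.re_sum] at h1
  rw [Finset.sum_congr rfl (fun k _ => h2 k)] at h1
  have hle : ∑ k : Fin 3, -((Q k j).im ^ 2) ≤ 0 :=
    Finset.sum_nonpos fun k _ => neg_nonpos.mpr (sq_nonneg _)
  linarith

theorem stmt_15 (lam mu nu : ℝ) (hlam : lam ≠ 0) (hmu : mu ≠ 0)
    (hsign : lam * mu < 0) (habs : |lam| ≠ |mu|) :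
    ¬ ∃ Q : Matrix (Fin 3) (Fin 3) ℂ, Qᵀ * Q = 1 ∧
      Qᴴ * Matrix.diagonal ![(lam : ℂ), mu, nu] * Q =
        Matrix.diagonal ![(-lam : ℂ), -mu, nu] := by
  rintro ⟨Q, hO, hD⟩
  set f := starRingEnd ℂ with hf
  have hO' : Q * Qᵀ = 1 := mul_eq_one_comm.mp hO
  have hCt : (Q.map f)ᵀ = Qᵀ.map f := (Matrix.transpose_map).symm
  have hH : Qᴴ = (Q.map f)ᵀ := by rw [hCt]; rfl
  have hCC : Q.map f * (Q.map f)ᵀ = 1 := by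
    rw [hCt, ← Matrix.map_mul, hO', Matrix.map_one f (map_zero f) (map_one f)]
  have key : Matrix.diagonal ![(lam : ℂ), mu, nu] * Q =
      Q.map f * Matrix.diagonal ![(-lam : ℂ), -mu, nu] := by
    rw [← hD, hH, ← Matrix.mul_assoc, ← Matrix.mul_assoc, hCC, Matrix.one_mul]
  have hE : ∀ i j : Fin 3, (![(lam : ℂ), mu, nu] i) * Q i j =
      f (Q i j) * (![(-lam : ℂ), -mu, nu] j) := by
    intro i j
    have := congrFun (congrFun key i) j
    simpa [Matrix.diagonal_mul, Matrix.mul_diagonal, Matrix.map_apply] using this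
  have habs' : lam ≠ -mu := by intro h; apply habs; rw [h, abs_neg]
  have habs'' : mu ≠ -lam := by intro h; apply habs; rw [h, abs_neg]
  have hlm : lam ≠ mu := by intro h; rw [h] at hsign; nlinarith
  by_cases hnu : nu = -lam
  · -- use column 1, d' 1 = -mu
    have h0 : (lam : ℂ) * Q 0 1 = f (Q 0 1) * (-(mu : ℂ)) := by simpa using hE 0 1
    have h1 : (mu : ℂ) * Q 1 1 = f (Q 1 1) * (-(mu : ℂ)) := by simpa using hE 1 1
    have h2 : (nu : ℂ) * Q 2 1 = f (Q 2 1) * (-(mu : ℂ)) := by simpa using hE 2 1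
    have hre : ∀ i : Fin 3, (Q i 1).re = 0 := by
      intro i
      fin_cases i
      · exact re_zero_aux lam (-mu) (Q 0 1) (by push_cast; linear_combination h0) habs'
      · exact re_zero_aux mu (-mu) (Q 1 1) (by push_cast; linear_combination h1)
          (by intro h; apply hmu; linarith)
      · exact re_zero_aux nu (-mu) (Q 2 1) (by push_cast; linear_combination h2)
          (by rw [hnu]; intro h; exact hlm (by linarith))
    exact col_contra Q 1 hre (by rw [hO]; simp)
  · -- use column 0, d' 0 = -lam
    have h0 : (lam : ℂ) * Q 0 0 = f (Q 0 0) * (-(lam : ℂ)) := by simpa using hE 0 0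
    have h1 : (mu : ℂ) * Q 1 0 = f (Q 1 0) * (-(lam : ℂ)) := by simpa using hE 1 0
    have h2 : (nu : ℂ) * Q 2 0 = f (Q 2 0) * (-(lam : ℂ)) := by simpa using hE 2 0
    have hre : ∀ i : Fin 3, (Q i 0).re = 0 := by
      intro i
      fin_cases i
      · exact re_zero_aux lam (-lam) (Q 0 0) (by push_cast; linear_combination h0)
          (by intro h; apply hlam; linarith)
      · exact re_zero_aux mu (-lam) (Q 1 0) (by push_cast; linear_combination h1) habs''
      · exact re_zero_aux nu (-lam) (Q 2 0) (by push_cast; linear_combination h2) hnu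
    exact col_contra Q 0 hre (by rw [hO]; simp)
end
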